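/- arXiv:2108.08779 — 4 statements merged into one kernel-verified Lean document; each statement's English description precedes it below -/
import Mathlib

section
/- Fix integers n ≥ 1 and m ≥ 0. Define a graph G whose vertices are non-decreasing n-tuples of integers (d_1 ≤ ... ≤ d_n), with an edge from (d_1,...,d_n) to (d'_1,...,d'_n) whenever there exists a permutation σ ≠ Id in S(n) and integers c_{a,b} ≥ -m (for each pair a < b with σ(a) > σ(b)) such that d'_a = d_{σ(a)} - Σ_{s< a, σ(s)>σ(a)} c_{s,a} + Σ_{a<t, σ(a)>σ(t)} c_{a,t} for all a. Then every connected component of G is finite. -/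
/-- The edge relation of the graph `G`: `d → d'` whenever there is a nontrivial
permutation `σ` and integers `c_{a,b} ≥ -m` (for pairs `a < b` with `σ a > σ b`) with
`d'_a = d_{σ(a)} - Σ_{s<a, σ(s)>σ(a)} c_{s,a} + Σ_{a<t, σ(a)>σ(t)} c_{a,t}`. -/
def GEdge (n m : ℕ) (d d' : Fin n → ℤ) : Prop :=
  ∃ σ : Equiv.Perm (Fin n), σ ≠ 1 ∧ ∃ c : Fin n → Fin n → ℤ,
    (∀ a b : Fin n, -(m : ℤ) ≤ c a b) ∧
    ∀ a : Fin n, d' a = d (σ a)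
      - ∑ s ∈ Finset.univ.filter (fun s : Fin n => s < a ∧ σ a < σ s), c s a
      + ∑ t ∈ Finset.univ.filter (fun t : Fin n => a < t ∧ σ t < σ a), c a t

/-!
Write `P_k d = d_0 + ⋯ + d_{k-1}`. Summing the defining equation of an edge `d → d'` over
`a < k`, the `c`-terms between two indices below `k` cancel, so `P_k d'` is the sum of `d` over
`σ({a < k})` plus the terms `c_{x,y}` with `x < k ≤ y`, each at least `-m`. Hence `P_k d' = P_k d`
when `σ` fixes `{a < k}`; otherwise monotonicity of `d` gives `P_k d' ≥ P_k d + (d_k - d_{k-1}) - mn²`,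
and combining this with the reverse edge gives `d'_k - d'_{k-1} ≤ 2mn²`.

So the potential `min_k (P_k d - mn²k²)` cannot decrease along an edge: at a minimiser `k` of
`d'` either `P_k` is unchanged, or the second difference of `k ↦ P_k d' - mn²k²` at `k` is
`≤ 0` and `k - 1` is a minimiser too. Edges are symmetric and preserve `P_n`, so on the component
of `v` every entry is bounded below by the potential of `v` and the sum of the entries is fixed,
which leaves finitely many tuples.
-/

open Finset
open scoped Pointwise

section

variable {n : ℕ}

def initialSegment (n k : ℕ) : Finset (Fin n) := {a | (a : ℕ) < k}

def prefixSum (d : Fin n → ℤ) (k : ℕ) : ℤ := ∑ a ∈ initialSegment n k, d a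

@[simp] lemma mem_initialSegment {k : ℕ} {a : Fin n} : a ∈ initialSegment n k ↔ (a : ℕ) < k := by
  simp [initialSegment]

lemma card_initialSegment {k : ℕ} (hk : k ≤ n) : #(initialSegment n k) = k := by
  simp [initialSegment, Fin.card_filter_val_lt, hk]

lemma initialSegment_self : initialSegment n n = univ := by
  ext a; simp

lemma prefixSum_zero (d : Fin n → ℤ) : prefixSum d 0 = 0 := by
  simp [prefixSum, initialSegment]

lemma prefixSum_self (d : Fin n → ℤ) : prefixSum d n = ∑ a, d a := by
  rw [prefixSum, initialSegment_self]

lemma prefixSum_succ (d : Fin n → ℤ) (a : Fin n) :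
    prefixSum d (a + 1) = prefixSum d a + d a := by
  have : initialSegment n (a + 1) = insert a (initialSegment n a) := by
    ext b; simp [← Fin.val_inj, le_iff_eq_or_lt]
  rw [prefixSum, this, sum_insert (by simp), add_comm, prefixSum]

def edgeTarget (σ : Equiv.Perm (Fin n)) (c : Fin n → Fin n → ℤ) (d : Fin n → ℤ) (a : Fin n) : ℤ :=
  d (σ a) - ∑ s with s < a ∧ σ a < σ s, c s a + ∑ t with a < t ∧ σ t < σ a, c a t

lemma prefixSum_edgeTarget (σ : Equiv.Perm (Fin n)) (c : Fin n → Fin n → ℤ) (d : Fin n → ℤ)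
    (k : ℕ) :
    prefixSum (edgeTarget σ c d) k = ∑ a ∈ initialSegment n k, d (σ a) +
      ∑ x : Fin n, ∑ y : Fin n, if (x : ℕ) < k ∧ k ≤ (y : ℕ) ∧ σ y < σ x then c x y else 0 := by
  simp only [prefixSum, edgeTarget, sum_add_distrib, sum_sub_distrib, initialSegment, sum_filter,
    ite_sum_zero, ← ite_and]
  rw [sub_add_eq_add_sub, add_sub_assoc, add_right_inj,
    sum_comm (f := fun (a s : Fin n) => if (a : ℕ) < k ∧ s < a ∧ σ a < σ s then c s a else 0),
    ← sum_sub_distrib]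
  refine sum_congr rfl fun x _ => ?_
  rw [← sum_sub_distrib]
  refine sum_congr rfl fun y _ => ?_
  simp only [Fin.lt_def]
  split_ifs <;> omega

lemma edgeTarget_inv (σ : Equiv.Perm (Fin n)) (c : Fin n → Fin n → ℤ) (d : Fin n → ℤ) :
    edgeTarget σ⁻¹ (fun a b => c (σ⁻¹ b) (σ⁻¹ a)) (edgeTarget σ c d) = d := by
  ext a
  have h₁ : ∑ s with s < a ∧ σ⁻¹ a < σ⁻¹ s, c (σ⁻¹ a) (σ⁻¹ s) =
      ∑ t with σ⁻¹ a < t ∧ σ t < a, c (σ⁻¹ a) t :=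
    sum_equiv σ⁻¹ (by simp [and_comm]) (by simp)
  have h₂ : ∑ t with a < t ∧ σ⁻¹ t < σ⁻¹ a, c (σ⁻¹ t) (σ⁻¹ a) =
      ∑ s with s < σ⁻¹ a ∧ a < σ s, c s (σ⁻¹ a) :=
    sum_equiv σ⁻¹ (by simp [and_comm]) (by simp)
  simp only [edgeTarget, h₁, h₂, show σ (σ⁻¹ a) = a from σ.apply_symm_apply a]
  ring

lemma sum_smul_initialSegment (σ : Equiv.Perm (Fin n)) (d : Fin n → ℤ) (k : ℕ) :
    ∑ b ∈ σ • initialSegment n k, d b = ∑ a ∈ initialSegment n k, d (σ a) := by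
  rw [smul_finset_def, sum_image fun a _ b _ h => MulAction.injective σ h]
  rfl

lemma prefixSum_edgeTarget_of_smul_eq (σ : Equiv.Perm (Fin n)) (c : Fin n → Fin n → ℤ)
    (d : Fin n → ℤ) {k : ℕ} (hσ : σ • initialSegment n k = initialSegment n k) :
    prefixSum (edgeTarget σ c d) k = prefixSum d k := by
  have hmem (a : Fin n) : (σ a : ℕ) < k ↔ (a : ℕ) < k := by
    simpa [hσ] using smul_mem_smul_finset_iff σ (b := a) (s := initialSegment n k)
  have hcross : ∀ x y : Fin n, ¬((x : ℕ) < k ∧ k ≤ (y : ℕ) ∧ σ y < σ x) := by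
    rintro x y ⟨hx, hy, hxy⟩
    have := (hmem x).2 hx
    have := mt (hmem y).1 (by omega)
    rw [Fin.lt_def] at hxy
    omega
  rw [prefixSum_edgeTarget, ← sum_smul_initialSegment, hσ]
  simp [hcross, prefixSum]

lemma prefixSum_add_gap_le_sum {d : Fin n → ℤ} (hd : Monotone d) {j : ℕ} (hj : j + 1 < n) {T : Finset (Fin n)}
    (hT : #T = j + 1) (hne : T ≠ initialSegment n (j + 1)) :
    prefixSum d (j + 1) + (d ⟨j + 1, hj⟩ - d ⟨j, by omega⟩) ≤ ∑ b ∈ T, d b := by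
  set I := initialSegment n (j + 1)
  have hcard : #(T \ I) = #(I \ T) := card_sdiff_comm (by rw [hT, card_initialSegment hj.le])
  have hpos : 0 < #(T \ I) := by
    refine card_pos.2 (sdiff_nonempty.2 fun hsub => hne (eq_of_subset_of_card_le hsub ?_))
    rw [hT, card_initialSegment hj.le]
  have hgap : 0 ≤ d ⟨j + 1, hj⟩ - d ⟨j, by omega⟩ := sub_nonneg.2 (hd (Fin.mk_le_mk.2 (by omega)))
  have hT' : #(T \ I) • d ⟨j + 1, hj⟩ ≤ ∑ b ∈ T \ I, d b :=
    card_nsmul_le_sum _ _ _ fun b hb => hd (by simp [I, Fin.le_def] at hb ⊢; omega)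
  have hI' : ∑ b ∈ I \ T, d b ≤ #(T \ I) • d ⟨j, by omega⟩ :=
    hcard ▸ sum_le_card_nsmul _ _ _ fun b hb => hd (by simp [I, Fin.le_def] at hb ⊢; omega)
  rw [prefixSum, ← sum_inter_add_sum_sdiff I T, ← sum_inter_add_sum_sdiff T I, inter_comm]
  rw [nsmul_eq_mul] at hT' hI'
  nlinarith

lemma prefixSum_add_gap_le_prefixSum_edgeTarget {m : ℕ} {σ : Equiv.Perm (Fin n)}
    {c : Fin n → Fin n → ℤ} {d : Fin n → ℤ} (hd : Monotone d) (hc : ∀ a b, -(m : ℤ) ≤ c a b)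
    {j : ℕ} (hj : j + 1 < n) (hσ : σ • initialSegment n (j + 1) ≠ initialSegment n (j + 1)) :
    prefixSum d (j + 1) + (d ⟨j + 1, hj⟩ - d ⟨j, by omega⟩) - m * n ^ 2 ≤
      prefixSum (edgeTarget σ c d) (j + 1) := by
  have hmoved := prefixSum_add_gap_le_sum hd hj (by rw [card_smul_finset, card_initialSegment hj.le]) hσ
  have hcross : -(m * n ^ 2 : ℤ) ≤ ∑ x : Fin n, ∑ y : Fin n,
      if (x : ℕ) < j + 1 ∧ j + 1 ≤ (y : ℕ) ∧ σ y < σ x then c x y else 0 := by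
    have hterm (x y : Fin n) : -(m : ℤ) ≤
        if (x : ℕ) < j + 1 ∧ j + 1 ≤ (y : ℕ) ∧ σ y < σ x then c x y else 0 := by
      split_ifs
      · exact hc x y
      · simp
    calc -(m * n ^ 2 : ℤ) = ∑ _x : Fin n, ∑ _y : Fin n, -(m : ℤ) := by simp; ring
      _ ≤ _ := sum_le_sum fun x _ => sum_le_sum fun y _ => hterm x y
  rw [prefixSum_edgeTarget, ← sum_smul_initialSegment]
  linarith

lemma edgeTarget_gap_le {m : ℕ} {σ : Equiv.Perm (Fin n)}
    {c : Fin n → Fin n → ℤ} {d : Fin n → ℤ} (hd : Monotone d) (hd' : Monotone (edgeTarget σ c d))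
    (hc : ∀ a b, -(m : ℤ) ≤ c a b)
    {j : ℕ} (hj : j + 1 < n) (hσ : σ • initialSegment n (j + 1) ≠ initialSegment n (j + 1)) :
    edgeTarget σ c d ⟨j + 1, hj⟩ - edgeTarget σ c d ⟨j, by omega⟩ ≤ 2 * (m * n ^ 2) := by
  have hforward := prefixSum_add_gap_le_prefixSum_edgeTarget hd hc hj hσ
  have hbackward := prefixSum_add_gap_le_prefixSum_edgeTarget hd'
    (c := fun a b => c (σ⁻¹ b) (σ⁻¹ a)) (fun a b => hc _ _) hj
    (by rwa [Ne, inv_smul_eq_iff, eq_comm])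
  rw [edgeTarget_inv] at hbackward
  have hgap : 0 ≤ d ⟨j + 1, hj⟩ - d ⟨j, by omega⟩ := sub_nonneg.2 (hd (Fin.mk_le_mk.2 (by omega)))
  linarith

lemma gEdge_iff {m : ℕ} {d d' : Fin n → ℤ} : GEdge n m d d' ↔
    ∃ σ : Equiv.Perm (Fin n), σ ≠ 1 ∧ ∃ c : Fin n → Fin n → ℤ,
      (∀ a b, -(m : ℤ) ≤ c a b) ∧ d' = edgeTarget σ c d := by
  simp only [GEdge, funext_iff]
  rfl

lemma GEdge.symm {m : ℕ} {d d' : Fin n → ℤ} (h : GEdge n m d d') : GEdge n m d' d := by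
  obtain ⟨σ, hσ, c, hc, rfl⟩ := gEdge_iff.1 h
  exact gEdge_iff.2 ⟨σ⁻¹, inv_ne_one.2 hσ, _, fun a b => hc _ _, (edgeTarget_inv σ c d).symm⟩

lemma GEdge.sum_eq {m : ℕ} {d d' : Fin n → ℤ} (h : GEdge n m d d') : ∑ a, d' a = ∑ a, d a := by
  obtain ⟨σ, -, c, -, rfl⟩ := gEdge_iff.1 h
  rw [← prefixSum_self, ← prefixSum_self, prefixSum_edgeTarget_of_smul_eq σ c d]
  rw [initialSegment_self, smul_finset_univ]

def potential (M : ℤ) (d : Fin n → ℤ) : ℤ :=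
  (range (n + 1)).inf' nonempty_range_add_one fun k => prefixSum d k - M * k ^ 2

lemma potential_le_prefixSum (M : ℤ) (d : Fin n → ℤ) {k : ℕ} (hk : k ≤ n) :
    potential M d ≤ prefixSum d k - M * k ^ 2 :=
  inf'_le _ (mem_range.2 (by omega))

lemma exists_potential_eq (M : ℤ) (d : Fin n → ℤ) :
    ∃ k ≤ n, prefixSum d k - M * k ^ 2 = potential M d := by
  obtain ⟨k, hk, h⟩ := exists_mem_eq_inf' nonempty_range_add_one
    fun k => prefixSum d k - M * k ^ 2
  exact ⟨k, Nat.lt_succ_iff.1 (mem_range.1 hk), h.symm⟩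

lemma potential_le_apply {M : ℤ} (hM : 0 ≤ M) {d : Fin n → ℤ} (hd : Monotone d) (a : Fin n) :
    potential M d ≤ d a := by
  let a₀ : Fin n := ⟨0, a.pos⟩
  have h₁ := potential_le_prefixSum M d (k := a₀ + 1) a.pos
  rw [prefixSum_succ, show (a₀ : ℕ) = 0 from rfl, prefixSum_zero] at h₁
  have := hd (Fin.mk_le_mk.2 (Nat.zero_le a) : a₀ ≤ a)
  push_cast at h₁
  linarith

lemma GEdge.potential_le {m : ℕ} {d d' : Fin n → ℤ} (h : GEdge n m d d') (hd : Monotone d)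
    (hd' : Monotone d') : potential (m * n ^ 2) d ≤ potential (m * n ^ 2) d' := by
  obtain ⟨σ, -, c, hc, rfl⟩ := gEdge_iff.1 h
  set M : ℤ := m * n ^ 2
  suffices key : ∀ k ≤ n, prefixSum (edgeTarget σ c d) k - M * k ^ 2 =
      potential M (edgeTarget σ c d) → potential M d ≤ potential M (edgeTarget σ c d) by
    obtain ⟨k, hk, hmin⟩ := exists_potential_eq M (edgeTarget σ c d)
    exact key k hk hmin
  intro k
  induction k with
  | zero =>
    intro _ hmin
    rw [← hmin]
    simpa [prefixSum_zero] using potential_le_prefixSum M d (Nat.zero_le n)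
  | succ k ih =>
    intro hk hmin
    by_cases hσ : σ • initialSegment n (k + 1) = initialSegment n (k + 1)
    · rw [← hmin, prefixSum_edgeTarget_of_smul_eq σ c d hσ]
      exact potential_le_prefixSum M d hk
    · have hk' : k + 1 < n := hk.lt_of_ne fun hkn => hσ (by
        rw [hkn, initialSegment_self, smul_finset_univ])
      have hgap := edgeTarget_gap_le hd hd' hc hk' hσ
      have h₂ := potential_le_prefixSum M (edgeTarget σ c d) (k := k + 1 + 1) hk'
      have h₀ := potential_le_prefixSum M (edgeTarget σ c d) (k := k) (by omega)
      have e₁ := prefixSum_succ (edgeTarget σ c d) ⟨k + 1, hk'⟩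
      have e₀ := prefixSum_succ (edgeTarget σ c d) ⟨k, by omega⟩
      simp only at e₁ e₀
      -- `d'_{k+1} - d'_k ≤ 2M` makes the second difference of `i ↦ P_i d' - M i²` at `k + 1`
      -- nonpositive, so `k` is a minimiser as well
      refine ih (by omega) (le_antisymm ?_ h₀)
      push_cast at h₂ h₀ hmin ⊢
      nlinarith

lemma finite_setOf_forall_le_and_sum_eq (L S : ℤ) :
    {w : Fin n → ℤ | (∀ a, L ≤ w a) ∧ ∑ a, w a = S}.Finite := by
  refine (Set.Finite.pi' fun _ => Set.finite_Icc L (S - (n - 1) • L)).subset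
    fun w ⟨hL, hS⟩ a => ⟨hL a, ?_⟩
  have hrest : (n - 1) • L ≤ ∑ b ∈ univ.erase a, w b := by
    simpa using card_nsmul_le_sum (univ.erase a) w L fun b _ => hL b
  have := add_sum_erase univ w (mem_univ a)
  linarith

end

/-- Every connected component of the graph `G` on non-decreasing `n`-tuples of
integers is finite. -/
theorem stmt1 (n m : ℕ) (v : {d : Fin n → ℤ // Monotone d}) :
    {w : {d : Fin n → ℤ // Monotone d} |
      Relation.ReflTransGen
        (fun x y => GEdge n m x.1 y.1 ∨ GEdge n m y.1 x.1) v w}.Finite := by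
  have hinv : ∀ w : {d : Fin n → ℤ // Monotone d},
      Relation.ReflTransGen (fun x y => GEdge n m x.1 y.1 ∨ GEdge n m y.1 x.1) v w →
      potential (m * n ^ 2) v.1 ≤ potential (m * n ^ 2) w.1 ∧ ∑ a, w.1 a = ∑ a, v.1 a := by
    intro w hw
    induction hw with
    | refl => exact ⟨le_rfl, rfl⟩
    | @tail x y _ hxy ih =>
      have hedge : GEdge n m x.1 y.1 := hxy.elim id GEdge.symm
      exact ⟨ih.1.trans (hedge.potential_le x.2 y.2), hedge.sum_eq.trans ih.2⟩
  refine ((finite_setOf_forall_le_and_sum_eq (potential (m * n ^ 2) v.1) (∑ a, v.1 a)).preimage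
    Subtype.val_injective.injOn).subset fun w hw => ?_
  obtain ⟨hpot, hsum⟩ := hinv w hw
  exact ⟨fun a => hpot.trans (potential_le_apply (by positivity) w.2 a), hsum⟩
end

section
/- Suppose (d_1 ≤ ... ≤ d_n) and (d'_1 ≤ ... ≤ d'_n) are joined by an edge of G given by permutation σ and coefficients c_{a,b} ≥ -m. If for some k ∈ {1,...,n-1}, σ does not map the set {1,...,k} to itself, then d_k - d_{k+1} ≥ -2mn. -/
/-!
Let `a` be the index below `k` on which `σ` is largest and `b` the index from `k` on which `σ`
is smallest. Since `σ` moves some index below `k` to `k` or above, `σ a ≥ k`, and by counting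
some index from `k` on is moved below `k`, so `σ b < k`. By maximality no `s < a` forms an
inversion with `a`, so `d' a` only gains coefficients: `d' a ≥ d (σ a) - mn`; symmetrically
`d' b ≤ d (σ b) + mn`. Monotonicity of `d'` (with `a < b`) and of `d` then gives
`d k - mn ≤ d (σ a) - mn ≤ d' a ≤ d' b ≤ d (σ b) + mn ≤ d (k - 1) + mn`.
-/

open Finset

theorem Equiv.Perm.mapsTo_compl {α : Type*} [Finite α] (σ : Equiv.Perm α) {s : Set α}
    (h : Set.MapsTo σ s s) : Set.MapsTo σ sᶜ sᶜ :=
  ((s.toFinite.injOn_iff_bijOn_of_mapsTo h).mp σ.injective.injOn).surjOn.mapsTo_compl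
    σ.injective

theorem neg_mul_le_sum_of_forall_neg_le {n : ℕ} (m : ℕ) (s : Finset (Fin n)) {f : Fin n → ℤ}
    (hf : ∀ x ∈ s, -(m : ℤ) ≤ f x) : -((m : ℤ) * n) ≤ ∑ x ∈ s, f x := by
  have hcard : (#s : ℤ) ≤ n := by exact_mod_cast (card_le_univ s).trans_eq (Fintype.card_fin n)
  calc -((m : ℤ) * n) ≤ #s • -(m : ℤ) := by rw [nsmul_eq_mul]; nlinarith
    _ ≤ ∑ x ∈ s, f x := card_nsmul_le_sum s f _ hf

section Edge

variable {n m : ℕ} {d d' : Fin n → ℤ} {σ : Equiv.Perm (Fin n)} {c : Fin n → Fin n → ℤ}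

theorem le_edge_of_no_left_inversion {a : Fin n} (hc : ∀ t, -(m : ℤ) ≤ c a t)
    (hedge : d' a = d (σ a)
      - ∑ s ∈ univ.filter (fun s : Fin n => s < a ∧ σ a < σ s), c s a
      + ∑ t ∈ univ.filter (fun t : Fin n => a < t ∧ σ t < σ a), c a t)
    (ha : ∀ s < a, σ s ≤ σ a) : d (σ a) - m * n ≤ d' a := by
  have hempty : univ.filter (fun s : Fin n => s < a ∧ σ a < σ s) = ∅ :=
    filter_eq_empty_iff.mpr fun s _ ⟨hsa, hσs⟩ => (ha s hsa).not_gt hσs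
  have hgain := neg_mul_le_sum_of_forall_neg_le m
    (univ.filter (fun t : Fin n => a < t ∧ σ t < σ a)) fun t _ => hc t
  rw [hedge, hempty, sum_empty]
  linarith

theorem edge_le_of_no_right_inversion {b : Fin n} (hc : ∀ s, -(m : ℤ) ≤ c s b)
    (hedge : d' b = d (σ b)
      - ∑ s ∈ univ.filter (fun s : Fin n => s < b ∧ σ b < σ s), c s b
      + ∑ t ∈ univ.filter (fun t : Fin n => b < t ∧ σ t < σ b), c b t)
    (hb : ∀ t, b < t → σ b ≤ σ t) : d' b ≤ d (σ b) + m * n := by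
  have hempty : univ.filter (fun t : Fin n => b < t ∧ σ t < σ b) = ∅ :=
    filter_eq_empty_iff.mpr fun t _ ⟨hbt, hσt⟩ => (hb t hbt).not_gt hσt
  have hloss := neg_mul_le_sum_of_forall_neg_le m
    (univ.filter (fun s : Fin n => s < b ∧ σ b < σ s)) fun s _ => hc s
  rw [hedge, hempty, sum_empty]
  linarith

end Edge

/-- If `(d_1 ≤ ... ≤ d_n)` and `(d'_1 ≤ ... ≤ d'_n)` are joined by an edge of `G` given
by a permutation `σ` and coefficients `c_{a,b} ≥ -m`, and `σ` does not map the set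
`{1,...,k}` to itself (here `0`-indexed as `{0,...,k-1}`), then `d_k - d_{k+1} ≥ -2mn`. -/
theorem stmt3 (n m : ℕ) (d d' : Fin n → ℤ) (hd : Monotone d) (hd' : Monotone d')
    (σ : Equiv.Perm (Fin n)) (c : Fin n → Fin n → ℤ)
    (hc : ∀ a b : Fin n, -(m : ℤ) ≤ c a b)
    (hedge : ∀ a : Fin n, d' a = d (σ a)
      - ∑ s ∈ Finset.univ.filter (fun s : Fin n => s < a ∧ σ a < σ s), c s a
      + ∑ t ∈ Finset.univ.filter (fun t : Fin n => a < t ∧ σ t < σ a), c a t)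
    (k : ℕ) (hk1 : 1 ≤ k) (hk2 : k < n)
    (hσ : ¬ (∀ a : Fin n, a.val < k → (σ a).val < k)) :
    d ⟨k - 1, by omega⟩ - d ⟨k, hk2⟩ ≥ -(2 * (m : ℤ) * (n : ℤ)) := by
  obtain ⟨a₀, ha₀, hσa₀⟩ : ∃ a : Fin n, a.val < k ∧ k ≤ (σ a).val := by
    simpa using hσ
  obtain ⟨b₀, hb₀, hσb₀⟩ : ∃ b : Fin n, k ≤ b.val ∧ (σ b).val < k := by
    by_contra! h
    exact hσ fun a ha => by
      simpa using σ.mapsTo_compl (s := {b | k ≤ b.val}) h (by simpa using ha)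
  obtain ⟨a, ha, ha_max⟩ := (univ.filter (fun x : Fin n => x.val < k)).exists_max_image σ
    ⟨a₀, by simpa using ha₀⟩
  obtain ⟨b, hb, hb_min⟩ := (univ.filter (fun x : Fin n => k ≤ x.val)).exists_min_image σ
    ⟨b₀, by simpa using hb₀⟩
  simp only [mem_filter, mem_univ, true_and] at ha ha_max hb hb_min
  have hσa : k ≤ (σ a).val := hσa₀.trans (ha_max a₀ ha₀)
  have hσb : (σ b).val < k := (Fin.le_def.mp (hb_min b₀ hb₀)).trans_lt hσb₀
  have hleft := le_edge_of_no_left_inversion (fun t => hc a t) (hedge a)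
    fun s hs => ha_max s (lt_trans hs ha)
  have hright := edge_le_of_no_right_inversion (fun s => hc s b) (hedge b)
    fun t ht => hb_min t (hb.trans ht.le)
  have hab : d' a ≤ d' b := hd' (show a.val ≤ b.val by omega)
  have hdk : d ⟨k, hk2⟩ ≤ d (σ a) := hd hσa
  have hdk' : d (σ b) ≤ d ⟨k - 1, by omega⟩ := hd (show (σ b).val ≤ k - 1 by omega)
  linarith
end

section
/- Fix a finite set I with a total order, a degree (n_i)_{i∈I} ∈ ℕ^I, an integer d, and a word v. Then there are only finitely many non-increasing words [i_1^{(d_1)}...i_n^{(d_n)}] of degree ((Σ ς_{i_a}), d_1+...+d_n) = ((n_i), d) that are lexicographically bounded above by v. -/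
/-- The order on letters `i^{(d)}`: `i^{(d)} < j^{(e)}` iff `d > e`, or `d = e` and
`i < j`. -/
def ltLetter {ι : Type*} [LT ι] (x y : ι × ℤ) : Prop :=
  y.2 < x.2 ∨ (x.2 = y.2 ∧ x.1 < y.1)

/-- `x ≥ y` for letters. -/
def geLetter {ι : Type*} [LT ι] (x y : ι × ℤ) : Prop :=
  ltLetter y x ∨ x = y

/-!
A word of degree `((n_i), d)` has length `n = ∑ i, n_i`. Along a non-increasing word the
degrees `d_a` weakly increase, and `w ≤ v = u :: _` forces `d_1 ≥ u.2`; so every `d_a` lies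
between `u.2` and `d - (n - 1) • u.2`. Hence the words in question have bounded length and letters from a finite set.
(For `v = []` only the empty word qualifies.)
-/

theorem Set.Finite.setOf_length_le_forall_mem {α : Type*} {s : Set α} (hs : s.Finite) (n : ℕ) :
    {l : List α | l.length ≤ n ∧ ∀ x ∈ l, x ∈ s}.Finite := by
  have := hs.to_subtype
  refine ((List.finite_length_le s n).image (List.map Subtype.val)).subset ?_
  rintro l ⟨hlen, hmem⟩
  obtain ⟨l, rfl⟩ : l ∈ Set.range (List.map Subtype.val) := (Set.range_list_map_coe s).ge hmem
  exact ⟨l, by simpa using hlen, rfl⟩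

theorem List.sum_count_eq_length {ι : Type*} [Fintype ι] [DecidableEq ι] (l : List ι) :
    ∑ i, l.count i = l.length := by
  simpa using Multiset.sum_count_eq_card (s := Finset.univ) (m := (l : Multiset ι))
    fun a _ => Finset.mem_univ a

theorem List.add_length_sub_one_nsmul_le_sum {M : Type*} [AddCommMonoid M] [PartialOrder M]
    [IsOrderedAddMonoid M] [DecidableEq M] {l : List M} {a b : M} (ha : a ∈ l)
    (hb : ∀ x ∈ l, b ≤ x) : a + (l.length - 1) • b ≤ l.sum := by
  rw [← List.sum_erase ha, ← List.length_erase_of_mem ha]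
  exact add_le_add_right
    ((l.erase a).card_nsmul_le_sum b fun x hx => hb x (List.mem_of_mem_erase hx)) a

theorem snd_le_of_geLetter {ι : Type*} [LT ι] {x y : ι × ℤ} (h : geLetter x y) : x.2 ≤ y.2 := by
  rcases h with (h | h) | rfl
  exacts [h.le, h.1.ge, le_rfl]

theorem snd_le_of_not_lex_cons {ι : Type*} [LT ι] {u : ι × ℤ} {v w : List (ι × ℤ)}
    (hw : List.IsChain geLetter w) (hvw : ¬ List.Lex ltLetter (u :: v) w) :
    ∀ x ∈ w, u.2 ≤ x.2 := by
  rcases w with _ | ⟨y, w⟩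
  · simp
  have hy : u.2 ≤ y.2 := not_lt.1 fun h => hvw (List.Lex.rel (Or.inl h))
  have hsorted : ((y :: w).map Prod.snd).Pairwise (· ≤ ·) :=
    (List.isChain_map Prod.snd |>.2 (hw.imp fun _ _ => snd_le_of_geLetter)).pairwise
  rintro x (_ | ⟨_, hx⟩)
  · exact hy
  · exact hy.trans (List.rel_of_pairwise_cons hsorted (List.mem_map_of_mem hx))

/-- There are only finitely many non-increasing words of a given degree
`((n_i)_{i ∈ I}, d)` that are lexicographically bounded above by a given word `v`. -/
theorem stmt7 {ι : Type*} [LinearOrder ι] [Fintype ι]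
    (nn : ι → ℕ) (d : ℤ) (v : List (ι × ℤ)) :
    {w : List (ι × ℤ) |
      List.Chain' geLetter w ∧
      (∀ i : ι, (w.map Prod.fst).count i = nn i) ∧
      (w.map Prod.snd).sum = d ∧
      ¬ List.Lex ltLetter v w}.Finite := by
  rcases v with _ | ⟨u, v⟩
  · refine (Set.finite_singleton []).subset ?_
    rintro (_ | ⟨x, w⟩) ⟨-, -, -, hvw⟩
    · rfl
    · exact absurd List.Lex.nil hvw
  set n := ∑ i, nn i
  have hletters : ((Set.univ : Set ι) ×ˢ Set.Icc u.2 (d - (n - 1) • u.2)).Finite :=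
    Set.finite_univ.prod (Set.finite_Icc _ _)
  refine (hletters.setOf_length_le_forall_mem n).subset ?_
  rintro w ⟨hchain, hcount, hsum, hvw⟩
  have hlen : w.length = n := by
    simp only [n, ← hcount, List.sum_count_eq_length, List.length_map]
  have hlower := snd_le_of_not_lex_cons hchain hvw
  refine ⟨hlen.le, fun x hx => ⟨trivial, hlower x hx, le_sub_iff_add_le.2 ?_⟩⟩
  have := List.add_length_sub_one_nsmul_le_sum (List.mem_map_of_mem (f := Prod.snd) hx)
    (b := u.2) (List.forall_mem_map.2 hlower)
  rwa [List.length_map, hlen, hsum] at this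
end

section
/- In a quotient of a free associative algebra with relations of the form e_{i,a} e_{j,b} + Σ_{x=1}^{m} c_x · e_{i,a-x} e_{j,b+x} = e_{j,b} e_{i,a} + Σ_{y=1}^{m} c'_y · e_{j,b-y} e_{i,a+y} (for generators e_{i,d}, i in a finite totally ordered set I, d ∈ ℤ, and fixed m), every product e_{i_1,d_1}···e_{i_n,d_n} can be written as a linear combination of products e_{j_1,r_1}···e_{j_n,r_n} such that the words [j_1^{(r_1)}...j_n^{(r_n)}] are lexicographically ≥ [i_1^{(d_1)}...i_n^{(d_n)}], each word [j_1^{(r_1)}...j_n^{(r_n)}] is non-increasing, and all exponents r_k satisfy min(d_k) - β(n) ≤ r_k ≤ max(d_k) + β(n) for a constant β(n) depending only on n and m. -/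
/-!
Whenever a word has an adjacent pair `x = i^{(a)} < y = j^{(b)}`, the relation rewrites `e_x e_y`
as a combination of the products for the pairs `(j^{(b-k)}, i^{(a+k)})`, `0 ≤ k ≤ m`, and
`(i^{(a-k)}, j^{(b+k)})`, `1 ≤ k ≤ m`; each resulting word is lexicographically larger than the old
one. Since `b ≤ a`, these moves preserve the staircase condition that the letter in position `k` has
exponent in `[lo + m k, hi + m k]`. Staircase words of a fixed length form a finite set, so the
rewriting terminates in non-increasing words, and with `lo = min d - m n`, `hi = max d` their
exponents stay within `β(n) = m n` of the original ones.
-/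

open scoped BigOperators

open Set Submodule

section Letter

variable {ι : Type*} [LinearOrder ι]

theorem ltLetter_iff_toLex_lt {x y : ι × ℤ} :
    ltLetter x y ↔ toLex (OrderDual.toDual x.2, x.1) < toLex (OrderDual.toDual y.2, y.1) := by
  rw [Prod.Lex.toLex_lt_toLex]
  rfl

instance : IsStrictTotalOrder (ι × ℤ) ltLetter where
  irrefl x := by simp [ltLetter_iff_toLex_lt]
  trans x y z := by simpa only [ltLetter_iff_toLex_lt] using lt_trans
  trichotomous x y hxy hyx := by
    rw [ltLetter_iff_toLex_lt, not_lt] at hxy hyx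
    have h := hxy.antisymm hyx
    simp only [EmbeddingLike.apply_eq_iff_eq, Prod.mk.injEq] at h
    exact Prod.ext h.2.symm h.1.symm

instance : IsStrictOrder (List (ι × ℤ)) (List.Lex ltLetter) :=
  isStrictWeakOrder_of_isOrderConnected.toIsStrictOrder

theorem ltLetter_of_not_geLetter {x y : ι × ℤ} (h : ¬ geLetter x y) : ltLetter x y := by
  rcases trichotomous_of ltLetter x y with hxy | rfl | hyx
  · exact hxy
  · exact absurd (Or.inr rfl) h
  · exact absurd (Or.inl hyx) h

theorem exists_ltLetter_of_not_isChain {L : List (ι × ℤ)} (h : ¬ L.IsChain geLetter) :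
    ∃ l₁ x y l₂, L = l₁ ++ x :: y :: l₂ ∧ ltLetter x y := by
  rw [List.isChain_iff_forall_rel_of_append_cons_cons] at h
  push Not at h
  obtain ⟨x, y, l₁, l₂, hL, hxy⟩ := h
  exact ⟨l₁, x, y, l₂, hL, ltLetter_of_not_geLetter hxy⟩

end Letter

theorem List.finite_setOf_length_eq_forall_mem {α : Type*} {T : Set α} (hT : T.Finite) (n : ℕ) :
    {l : List α | l.length = n ∧ ∀ x ∈ l, x ∈ T}.Finite := by
  have := hT.to_subtype
  refine ((List.finite_length_eq T n).image (List.map Subtype.val)).subset ?_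
  rintro l ⟨hl, hlT⟩
  exact ⟨l.attachWith T hlT, (List.length_attachWith ..).trans hl,
    List.attachWith_map_subtype_val hlT⟩

theorem List.exists_ofFn_eq {α : Type*} {n : ℕ} {L : List α} (h : L.length = n) :
    ∃ u : Fin n → α, List.ofFn u = L :=
  ⟨_, (List.ofFn_congr h L.get).symm.trans (List.ofFn_get L)⟩

theorem Submodule.exists_finset_of_mem_span_image {α R M : Type*} [Semiring R] [AddCommMonoid M]
    [Module R M] {v : α → M} {s : Set α} {x : M} (hx : x ∈ span R (v '' s)) :
    ∃ (S : Finset α) (c : α → R), x = ∑ a ∈ S, c a • v a ∧ ∀ a ∈ S, a ∈ s := by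
  obtain ⟨l, hls, rfl⟩ := (Finsupp.mem_span_image_iff_linearCombination R).1 hx
  exact ⟨l.support, l, Finsupp.linearCombination_apply R l, fun a ha => hls ha⟩

section Staircase

variable {α : Type*}

def Staircase (s : ℤ) : ℤ → ℤ → List (α × ℤ) → Prop
  | _, _, [] => True
  | lo, hi, x :: L => x.2 ∈ Icc lo hi ∧ Staircase s (lo + s) (hi + s) L

variable {s : ℤ}

theorem staircase_append {lo hi : ℤ} {l₁ l₂ : List (α × ℤ)} :
    Staircase s lo hi (l₁ ++ l₂) ↔
      Staircase s lo hi l₁ ∧ Staircase s (lo + s * l₁.length) (hi + s * l₁.length) l₂ := by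
  induction l₁ generalizing lo hi with
  | nil => simp [Staircase]
  | cons x l ih =>
    simp only [List.cons_append, Staircase, ih, List.length_cons, Nat.cast_succ, and_assoc]
    ring_nf

theorem staircase_append_cons_cons {lo hi : ℤ} {l₁ l₂ : List (α × ℤ)} {x y : α × ℤ} :
    Staircase s lo hi (l₁ ++ x :: y :: l₂) ↔
      Staircase s lo hi l₁ ∧ x.2 ∈ Icc (lo + s * l₁.length) (hi + s * l₁.length) ∧
        y.2 ∈ Icc (lo + s * l₁.length + s) (hi + s * l₁.length + s) ∧
        Staircase s (lo + s * l₁.length + s + s) (hi + s * l₁.length + s + s) l₂ := by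
  rw [staircase_append]
  rfl

theorem staircase_of_forall_mem (hs : 0 ≤ s) {lo hi : ℤ} {L : List (α × ℤ)}
    (h : ∀ x ∈ L, x.2 ∈ Icc (lo + s * L.length) hi) : Staircase s lo hi L := by
  induction L generalizing lo hi with
  | nil => trivial
  | cons x l ih =>
    have hsl : 0 ≤ s * l.length := mul_nonneg hs l.length.cast_nonneg
    simp only [List.mem_cons, forall_eq_or_imp, List.length_cons, Nat.cast_succ, mem_Icc] at h
    refine ⟨⟨by linarith [h.1.1], h.1.2⟩, ih fun y hy => ⟨by linarith [(h.2 y hy).1], ?_⟩⟩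
    linarith [(h.2 y hy).2]

theorem mem_Icc_of_staircase (hs : 0 ≤ s) {lo hi : ℤ} {L : List (α × ℤ)}
    (h : Staircase s lo hi L) {x : α × ℤ} (hx : x ∈ L) : x.2 ∈ Icc lo (hi + s * L.length) := by
  induction L generalizing lo hi with
  | nil => cases hx
  | cons y l ih =>
    have hsl : 0 ≤ s * l.length := mul_nonneg hs l.length.cast_nonneg
    obtain ⟨⟨hy₁, hy₂⟩, hl⟩ := h
    simp only [List.length_cons, Nat.cast_succ, mem_Icc]
    rcases List.mem_cons.1 hx with rfl | hx
    · constructor <;> linarith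
    · obtain ⟨h₁, h₂⟩ := ih hl hx
      constructor <;> linarith

end Staircase

section Algebra

variable {α F A : Type*} [CommRing F] [Ring A] [Algebra F A] {m : ℕ}

def wordProd (e : α → ℤ → A) (L : List (α × ℤ)) : A :=
  (L.map fun x => e x.1 x.2).prod

def SwapRelations (e : α → ℤ → A) (c c' : α → α → Fin m → F) : Prop :=
  ∀ (i j : α) (a b : ℤ),
    e i a * e j b + ∑ x : Fin m, c i j x • (e i (a - ((x : ℕ) + 1)) * e j (b + ((x : ℕ) + 1)))
      = e j b * e i a + ∑ y : Fin m, c' i j y • (e j (b - ((y : ℕ) + 1)) * e i (a + ((y : ℕ) + 1)))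

theorem wordProd_append_cons_cons_mem {e : α → ℤ → A} {c c' : α → α → Fin m → F}
    (hrel : SwapRelations e c c') {M : Submodule F A} (l₁ l₂ : List (α × ℤ)) (i j : α) (a b : ℤ)
    (hswap : ∀ k : ℕ, k ≤ m → wordProd e (l₁ ++ (j, b - k) :: (i, a + k) :: l₂) ∈ M)
    (hshift : ∀ k : ℕ, 1 ≤ k → k ≤ m → wordProd e (l₁ ++ (i, a - k) :: (j, b + k) :: l₂) ∈ M) :
    wordProd e (l₁ ++ (i, a) :: (j, b) :: l₂) ∈ M := by
  set f : A →ₗ[F] A := LinearMap.mulLeft F (wordProd e l₁) ∘ₗ LinearMap.mulRight F (wordProd e l₂)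
  have hf : ∀ x y : α × ℤ, wordProd e (l₁ ++ x :: y :: l₂) = f (e x.1 x.2 * e y.1 y.2) := by
    intro x y
    simp [f, wordProd, mul_assoc]
  rw [hf, eq_sub_of_add_eq (hrel i j a b), map_sub, map_add, map_sum, map_sum]
  refine sub_mem (add_mem ?_ (sum_mem fun t _ => ?_)) (sum_mem fun t _ => ?_)
  · simpa [hf] using hswap 0 m.zero_le
  · rw [map_smul]
    exact smul_mem _ _ (by simpa [hf] using hswap (t + 1) t.isLt)
  · rw [map_smul]
    exact smul_mem _ _ (by simpa [hf] using hshift (t + 1) (Nat.le_add_left 1 t) t.isLt)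

end Algebra

section Rewriting

variable {ι F A : Type*} [LinearOrder ι] [Finite ι] [CommRing F] [Ring A] [Algebra F A] {m : ℕ}
  {e : ι → ℤ → A} {c c' : ι → ι → Fin m → F}

theorem wordProd_mem_of_forall_isChain (hrel : SwapRelations e c c')
    {M : Submodule F A} {lo hi : ℤ} {w : List (ι × ℤ)}
    (hM : ∀ L : List (ι × ℤ), L.length = w.length → Staircase m lo hi L →
      ¬ List.Lex ltLetter L w → L.IsChain geLetter → wordProd e L ∈ M)
    (hw : Staircase m lo hi w) : wordProd e w ∈ M := by
  set T := {L : List (ι × ℤ) |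
    L.length = w.length ∧ Staircase m lo hi L ∧ ¬ List.Lex ltLetter L w}
  have hT : T.Finite :=
    (List.finite_setOf_length_eq_forall_mem (finite_univ.prod (finite_Icc lo (hi + m * w.length)))
      w.length).subset fun L ⟨hlen, hL, _⟩ =>
        ⟨hlen, fun x hx => ⟨trivial, hlen ▸ mem_Icc_of_staircase m.cast_nonneg hL hx⟩⟩
  refine (hT.wellFoundedOn (r := Function.swap (List.Lex ltLetter))).induction
    (P := fun L => wordProd e L ∈ M) ⟨rfl, hw, irrefl w⟩ ?_
  rintro L ⟨hlen, hL, hLw⟩ IH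
  by_cases hch : L.IsChain geLetter
  · exact hM L hlen hL hLw hch
  obtain ⟨l₁, ⟨i, a⟩, ⟨j, b⟩, l₂, rfl, hlt⟩ := exists_ltLetter_of_not_isChain hch
  obtain ⟨hl₁, ⟨ha₁, ha₂⟩, ⟨hb₁, hb₂⟩, hl₂⟩ := staircase_append_cons_cons.1 hL
  set lo' := lo + m * l₁.length
  set hi' := hi + m * l₁.length
  have hba : b ≤ a := by rcases hlt with h | ⟨h, -⟩ <;> omega
  have hchild : ∀ u v : ι × ℤ, ltLetter (i, a) u → u.2 ∈ Icc lo' hi' →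
      v.2 ∈ Icc (lo' + m) (hi' + m) → wordProd e (l₁ ++ u :: v :: l₂) ∈ M := by
    intro u v hu hu₂ hv₂
    have hlex : List.Lex ltLetter (l₁ ++ (i, a) :: (j, b) :: l₂) (l₁ ++ u :: v :: l₂) :=
      List.Lex.append_left _ (.rel hu) l₁
    exact IH _ ⟨by simpa using hlen, staircase_append_cons_cons.2 ⟨hl₁, hu₂, hv₂, hl₂⟩,
      fun h => hLw (_root_.trans hlex h)⟩ hlex
  apply wordProd_append_cons_cons_mem hrel l₁ l₂ i j a b
  · intro k hk
    refine hchild _ _ ?_ ⟨?_, ?_⟩ ⟨?_, ?_⟩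
    · rcases k.eq_zero_or_pos with rfl | hk₀
      · simpa using hlt
      · exact Or.inl (by dsimp only; omega)
    all_goals (dsimp only; omega)
  · intro k hk₁ hk
    refine hchild _ _ (Or.inl (by dsimp only; omega)) ⟨?_, ?_⟩ ⟨?_, ?_⟩ <;> dsimp only <;> omega

theorem exists_sum_nonincreasing {n : ℕ} (hrel : SwapRelations e c c') (w : Fin n → ι × ℤ)
    {lo hi : ℤ} (hw : ∀ k, (w k).2 ∈ Icc lo hi) :
    ∃ (S : Finset (Fin n → ι × ℤ)) (coeff : (Fin n → ι × ℤ) → F),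
      wordProd e (List.ofFn w) = ∑ u ∈ S, coeff u • wordProd e (List.ofFn u) ∧
      ∀ u ∈ S, ¬ List.Lex ltLetter (List.ofFn u) (List.ofFn w) ∧
        (List.ofFn u).IsChain geLetter ∧ ∀ k, (u k).2 ∈ Icc (lo - m * n) (hi + m * n) := by
  refine exists_finset_of_mem_span_image (wordProd_mem_of_forall_isChain hrel ?_
    (staircase_of_forall_mem (lo := lo - m * n) (hi := hi) m.cast_nonneg ?_))
  · intro L hlen hL hLw hch
    obtain ⟨u, rfl⟩ := List.exists_ofFn_eq (hlen.trans (List.length_ofFn))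
    refine subset_span ⟨u, ⟨hLw, hch, fun k => ?_⟩, rfl⟩
    simpa using mem_Icc_of_staircase m.cast_nonneg hL (List.mem_ofFn.2 ⟨k, rfl⟩)
  · simpa using hw

end Rewriting

/-- In any algebra with generators `e_{i,d}` satisfying quadratic relations of the form
`e_{i,a} e_{j,b} + Σ_{x=1}^m c_x e_{i,a-x} e_{j,b+x} = e_{j,b} e_{i,a} + Σ_{y=1}^m c'_y e_{j,b-y} e_{i,a+y}`,
every product `e_{i_1,d_1} ⋯ e_{i_n,d_n}` is a linear combination of products indexed by
non-increasing words that are lexicographically `≥ [i_1^{(d_1)} … i_n^{(d_n)}]` and whose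
exponents lie within `β(n)` of the interval `[min d_k, max d_k]`, for a constant `β(n)`
depending only on `n` and `m`. -/
theorem stmt13 {ι : Type*} [Fintype ι] [LinearOrder ι] (F : Type*) [Field F]
    (m n : ℕ) :
    ∃ β : ℕ,
      ∀ (A : Type*) [Ring A] [Algebra F A] (e : ι → ℤ → A)
        (c c' : ι → ι → Fin m → F),
        (∀ (i j : ι) (a b : ℤ),
          e i a * e j b
              + ∑ x : Fin m, c i j x • (e i (a - ((x : ℕ) + 1)) * e j (b + ((x : ℕ) + 1)))
            = e j b * e i a
              + ∑ y : Fin m, c' i j y • (e j (b - ((y : ℕ) + 1)) * e i (a + ((y : ℕ) + 1)))) →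
        ∀ w : Fin n → ι × ℤ,
          ∃ (S : Finset (Fin n → ι × ℤ)) (coeff : (Fin n → ι × ℤ) → F),
            (List.ofFn (fun k => e (w k).1 (w k).2)).prod
                = ∑ u ∈ S, coeff u • (List.ofFn (fun k => e (u k).1 (u k).2)).prod ∧
            ∀ u ∈ S,
              (¬ List.Lex ltLetter (List.ofFn u) (List.ofFn w)) ∧
              List.Chain' geLetter (List.ofFn u) ∧
              ∀ k : Fin n,
                (∃ l : Fin n, (w l).2 - (β : ℤ) ≤ (u k).2) ∧
                (∃ l : Fin n, (u k).2 ≤ (w l).2 + (β : ℤ)) := by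
  refine ⟨m * n, fun A _ _ e c c' hrel w => ?_⟩
  have hprod : ∀ u : Fin n → ι × ℤ,
      (List.ofFn fun k => e (u k).1 (u k).2).prod = wordProd e (List.ofFn u) := fun u => by
    simp [wordProd, List.map_ofFn, Function.comp_def]
  simp only [hprod]
  rcases isEmpty_or_nonempty (Fin n) with hn | hn
  · obtain ⟨S, coeff, hsum, hS⟩ := exists_sum_nonincreasing hrel w (lo := 0) (hi := 0) isEmptyElim
    exact ⟨S, coeff, hsum, fun u hu => ⟨(hS u hu).1, (hS u hu).2.1, isEmptyElim⟩⟩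
  obtain ⟨kmin, -, hmin⟩ := Finset.univ.exists_min_image (fun k => (w k).2) Finset.univ_nonempty
  obtain ⟨kmax, -, hmax⟩ := Finset.univ.exists_max_image (fun k => (w k).2) Finset.univ_nonempty
  obtain ⟨S, coeff, hsum, hS⟩ := exists_sum_nonincreasing hrel w
    fun k => ⟨hmin k (Finset.mem_univ k), hmax k (Finset.mem_univ k)⟩
  refine ⟨S, coeff, hsum, fun u hu => ⟨(hS u hu).1, (hS u hu).2.1, fun k => ?_⟩⟩
  have hk := (hS u hu).2.2 k
  push_cast
  exact ⟨⟨kmin, by linarith [hk.1]⟩, ⟨kmax, by linarith [hk.2]⟩⟩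
end
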